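/- arXiv:1205.3437 — 2 statements merged into one kernel-verified Lean document; each statement's English description precedes it below -/
import Mathlib

section
/- For every T ≥ 0 and every smooth compactly supported function s : ℝ^l → ΛV*, one has ∫_{ℝ^l} ⟨(H_T s)(Z), s(Z)⟩ dZ ≥ 0. (This is the positivity part of Proposition 2.3 and Theorem 2.9: the model Witten Laplacian is a positive operator.) -/
set_option linter.unnecessarySeqFocus false

open MeasureTheory

noncomputable section

/-- Coordinate model of `ΛV*` with respect to the orthonormal basis of monomials
`e^{i_1} ∧ … ∧ e^{i_k}`, indexed by subsets `I ⊆ {1,…,l}`. -/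
abbrev ExtAlg (l : ℕ) := EuclideanSpace ℝ (Finset (Fin l))

/-- The sign `(-1)^{#{i ∈ I : i < α}}`. -/
def msign {l : ℕ} (α : Fin l) (I : Finset (Fin l)) : ℝ :=
  (-1 : ℝ) ^ (I.filter (· < α)).card

/-- Exterior (left wedge) multiplication by the basis covector `e^α`. -/
def wedgeBasis {l : ℕ} (α : Fin l) : ExtAlg l →ₗ[ℝ] ExtAlg l where
  toFun s := WithLp.toLp 2 (fun I => if α ∈ I then msign α I * s (I.erase α) else 0)
  map_add' s t := by
    ext I
    by_cases h : α ∈ I <;> simp [h, mul_add]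
  map_smul' c s := by
    ext I
    by_cases h : α ∈ I <;> simp [h] <;> ring_nf

/-- Interior multiplication (contraction) by the basis vector `e_α`. -/
def contractBasis {l : ℕ} (α : Fin l) : ExtAlg l →ₗ[ℝ] ExtAlg l where
  toFun s := WithLp.toLp 2 (fun I => if α ∈ I then 0 else msign α I * s (insert α I))
  map_add' s t := by
    ext I
    by_cases h : α ∈ I <;> simp [h, mul_add]
  map_smul' c s := by
    ext I
    by_cases h : α ∈ I <;> simp [h] <;> ring_nf

/-- The operator `K = Σ_{α=1}^{n⁻} i_{e_α}∘(e^α∧) + Σ_{α=n⁻+1}^{l} (e^α∧)∘i_{e_α}`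
of (2.12). -/
def Kop (l nm : ℕ) : ExtAlg l →ₗ[ℝ] ExtAlg l :=
  ∑ α ∈ Finset.univ.filter (fun α : Fin l => (α : ℕ) < nm),
      contractBasis α ∘ₗ wedgeBasis α
    + ∑ α ∈ Finset.univ.filter (fun α : Fin l => nm ≤ (α : ℕ)),
      wedgeBasis α ∘ₗ contractBasis α

/-- Second partial derivative `∂²s/∂Z_α²`. -/
def pderiv2 {l : ℕ} (α : Fin l) (s : EuclideanSpace ℝ (Fin l) → ExtAlg l) :
    EuclideanSpace ℝ (Fin l) → ExtAlg l :=
  fun Z => fderiv ℝ (fun W => fderiv ℝ s W (EuclideanSpace.single α 1)) Z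
    (EuclideanSpace.single α 1)

/-- The model Witten Laplacian
`(H_T s)(Z) = −Σ_α (∂²s/∂Z_α²)(Z) + (T²|Z|² − Tl)·s(Z) + 2T·K(s(Z))`. -/
def wittenH (l nm : ℕ) (T : ℝ) (s : EuclideanSpace ℝ (Fin l) → ExtAlg l) :
    EuclideanSpace ℝ (Fin l) → ExtAlg l :=
  fun Z => -(∑ α : Fin l, pderiv2 α s Z) + (T ^ 2 * ‖Z‖ ^ 2 - T * l) • s Z
    + (2 * T) • Kop l nm (s Z)

/-!
For each coordinate, `-∂_α² + T²Z_α² - T = (-∂_α + T Z_α)(∂_α + T Z_α)`, so pointwise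
`⟪H_T s, s⟫ = Σ_α ‖(∂_α + T Z_α) s‖² + 2T ⟪K s, s⟫ - Σ_α ∂_α (⟪∂_α s, s⟫ + T Z_α ‖s‖²)`.
The divergence term integrates to zero because `s` has compact support, and `⟪K s, s⟫ ≥ 0`
because `i_{e_α} ∘ (e^α∧)` and `(e^α∧) ∘ i_{e_α}` are the orthogonal projections onto the
monomials without, resp. with, the factor `e^α`; so `K` is diagonal with eigenvalues in `ℕ`.
-/

open scoped RealInnerProductSpace

section Kop

variable {l : ℕ}

lemma msign_mul_self (α : Fin l) (I : Finset (Fin l)) : msign α I * msign α I = 1 := by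
  rw [msign, ← mul_pow]; norm_num

lemma msign_insert_self (α : Fin l) (I : Finset (Fin l)) : msign α (insert α I) = msign α I := by
  simp [msign, Finset.filter_insert]

lemma msign_erase_self (α : Fin l) (I : Finset (Fin l)) : msign α (I.erase α) = msign α I := by
  rw [msign, msign, Finset.filter_erase, Finset.erase_eq_of_notMem (by simp)]

lemma contractBasis_wedgeBasis_apply (α : Fin l) (x : ExtAlg l) (I : Finset (Fin l)) :
    contractBasis α (wedgeBasis α x) I = if α ∈ I then 0 else x I := by
  by_cases h : α ∈ I
  · simp [contractBasis, h]
  · simp [contractBasis, wedgeBasis, h, msign_insert_self, ← mul_assoc, msign_mul_self]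

lemma wedgeBasis_contractBasis_apply (α : Fin l) (x : ExtAlg l) (I : Finset (Fin l)) :
    wedgeBasis α (contractBasis α x) I = if α ∈ I then x I else 0 := by
  by_cases h : α ∈ I
  · simp [contractBasis, wedgeBasis, h, msign_erase_self, ← mul_assoc, msign_mul_self]
  · simp [wedgeBasis, h]

lemma Kop_apply (nm : ℕ) (x : ExtAlg l) (I : Finset (Fin l)) :
    Kop l nm x I = ((Iᶜ.filter fun α : Fin l => (α : ℕ) < nm).card
      + (I.filter fun α : Fin l => nm ≤ (α : ℕ)).card : ℕ) * x I := by
  simp [Kop, contractBasis_wedgeBasis_apply, wedgeBasis_contractBasis_apply, Finset.sum_ite,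
    Finset.filter_filter, add_mul, Finset.filter_inter]
  left
  congr 1
  ext
  simp [and_comm]

lemma inner_Kop_self_nonneg (nm : ℕ) (x : ExtAlg l) : 0 ≤ ⟪Kop l nm x, x⟫ := by
  rw [PiLp.inner_apply]
  refine Finset.sum_nonneg fun I _ => ?_
  rw [Kop_apply, RCLike.inner_apply, conj_trivial, mul_left_comm]
  exact mul_nonneg (Nat.cast_nonneg _) (mul_self_nonneg _)

end Kop

theorem integral_fderiv_apply_eq_zero {E : Type*} [NormedAddCommGroup E] [NormedSpace ℝ E]
    [FiniteDimensional ℝ E] [MeasurableSpace E] [BorelSpace E] {μ : Measure E}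
    [μ.IsAddHaarMeasure] {f : E → ℝ} (hf : ContDiff ℝ 1 f) (h'f : HasCompactSupport f) (v : E) :
    ∫ x, fderiv ℝ f x v ∂μ = 0 := by
  have hf' : Continuous fun x => fderiv ℝ f x v :=
    (hf.continuous_fderiv one_ne_zero).clm_apply continuous_const
  -- integrate by parts against the constant function `1`
  simpa using integral_mul_fderiv_eq_neg_fderiv_mul_of_integrable (μ := μ)
    (f := fun _ => (1 : ℝ)) (g := f) (v := v) (by simp)
    (by simpa using hf'.integrable_of_hasCompactSupport (h'f.fderiv_apply ℝ v))
    (by simpa using hf.continuous.integrable_of_hasCompactSupport h'f)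
    (fun _ _ => differentiableAt_const _) (fun x _ => hf.differentiable one_ne_zero x)

section CoordDeriv

variable {l : ℕ} {F : Type*} [NormedAddCommGroup F] [InnerProductSpace ℝ F]

def coordDeriv (α : Fin l) (s : EuclideanSpace ℝ (Fin l) → F) : EuclideanSpace ℝ (Fin l) → F :=
  fun Z => fderiv ℝ s Z (EuclideanSpace.single α 1)

lemma pderiv2_eq_coordDeriv_coordDeriv (α : Fin l) (s : EuclideanSpace ℝ (Fin l) → ExtAlg l) :
    pderiv2 α s = coordDeriv α (coordDeriv α s) := rfl

lemma ContDiff.coordDeriv {n : WithTop ℕ∞} {s : EuclideanSpace ℝ (Fin l) → F}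
    (hs : ContDiff ℝ (n + 1) s) (α : Fin l) : ContDiff ℝ n (coordDeriv α s) :=
  (hs.fderiv_right le_rfl).clm_apply contDiff_const

lemma HasCompactSupport.coordDeriv {s : EuclideanSpace ℝ (Fin l) → F} (hs : HasCompactSupport s)
    (α : Fin l) : HasCompactSupport (coordDeriv α s) :=
  hs.fderiv_apply ℝ _

def coordFlux (T : ℝ) (α : Fin l) (s : EuclideanSpace ℝ (Fin l) → F) :
    EuclideanSpace ℝ (Fin l) → ℝ :=
  fun Z => ⟪coordDeriv α s Z, s Z⟫ + T * Z α * ‖s Z‖ ^ 2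

variable {s : EuclideanSpace ℝ (Fin l) → F}

lemma ContDiff.coordFlux {n : WithTop ℕ∞} (hs : ContDiff ℝ (n + 1) s) (T : ℝ) (α : Fin l) :
    ContDiff ℝ n (coordFlux T α s) :=
  ((hs.coordDeriv α).inner ℝ (hs.of_le le_self_add)).add <|
    (contDiff_const.mul (EuclideanSpace.proj α).contDiff).mul ((hs.of_le le_self_add).norm_sq ℝ)

lemma HasCompactSupport.coordFlux (hs : HasCompactSupport s) (T : ℝ) (α : Fin l) :
    HasCompactSupport (coordFlux T α s) :=
  hs.mono' fun Z hZ => by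
    by_contra h
    simp [_root_.coordFlux, image_eq_zero_of_notMem_tsupport h] at hZ

lemma coordDeriv_coordFlux (hs : ContDiff ℝ 2 s) (T : ℝ) (α : Fin l)
    (Z : EuclideanSpace ℝ (Fin l)) :
    coordDeriv α (coordFlux T α s) Z = ‖coordDeriv α s Z + (T * Z α) • s Z‖ ^ 2
      + ⟪coordDeriv α (coordDeriv α s) Z, s Z⟫ - (T ^ 2 * Z α ^ 2 - T) * ‖s Z‖ ^ 2 := by
  have hs' : HasFDerivAt s (fderiv ℝ s Z) Z :=
    (hs.differentiable two_ne_zero Z).hasFDerivAt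
  have hD : HasFDerivAt (coordDeriv α s) (fderiv ℝ (coordDeriv α s) Z) Z :=
    ((hs.coordDeriv (n := 1) α).differentiable one_ne_zero Z).hasFDerivAt
  have hcoord := ((EuclideanSpace.proj (𝕜 := ℝ) (ι := Fin l) α).hasFDerivAt (x := Z)).const_mul T
  have hflux : HasFDerivAt (coordFlux T α s) _ Z :=
    (hD.inner ℝ hs').add (hcoord.mul hs'.norm_sq)
  have hDs : fderiv ℝ s Z (EuclideanSpace.single α 1) = coordDeriv α s Z := rfl
  show fderiv ℝ (coordFlux T α s) Z (EuclideanSpace.single α 1) = _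
    + ⟪fderiv ℝ (coordDeriv α s) Z (EuclideanSpace.single α 1), s Z⟫ - _
  rw [hflux.fderiv, norm_add_sq_real, norm_smul, mul_pow, Real.norm_eq_abs, sq_abs,
    real_inner_smul_right]
  simp [hDs, real_inner_comm (s Z)]
  ring

end CoordDeriv

section WittenLaplacian

variable {l : ℕ} {s : EuclideanSpace ℝ (Fin l) → ExtAlg l}

def wittenEnergyDensity (l nm : ℕ) (T : ℝ) (s : EuclideanSpace ℝ (Fin l) → ExtAlg l)
    (Z : EuclideanSpace ℝ (Fin l)) : ℝ :=
  ∑ α, ‖coordDeriv α s Z + (T * Z α) • s Z‖ ^ 2 + 2 * T * ⟪Kop l nm (s Z), s Z⟫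

lemma wittenEnergyDensity_nonneg (nm : ℕ) {T : ℝ} (hT : 0 ≤ T)
    (s : EuclideanSpace ℝ (Fin l) → ExtAlg l) (Z : EuclideanSpace ℝ (Fin l)) :
    0 ≤ wittenEnergyDensity l nm T s Z :=
  add_nonneg (Finset.sum_nonneg fun _ _ => sq_nonneg _)
    (mul_nonneg (by positivity) (inner_Kop_self_nonneg nm (s Z)))

lemma integrable_wittenEnergyDensity (nm : ℕ) (T : ℝ) (hs : ContDiff ℝ 1 s)
    (hsupp : HasCompactSupport s) : Integrable (wittenEnergyDensity l nm T s) := by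
  have hcont : Continuous (wittenEnergyDensity l nm T s) :=
    (continuous_finsetSum _ fun α _ => (((hs.coordDeriv (n := 0) α).continuous.add
      ((continuous_const.mul (EuclideanSpace.proj α).continuous).smul
        hs.continuous)).norm.pow 2)).add
      (continuous_const.mul
        (((Kop l nm).continuous_of_finiteDimensional.comp hs.continuous).inner hs.continuous))
  refine hcont.integrable_of_hasCompactSupport (hsupp.mono' fun Z hZ => ?_)
  by_contra h
  simp [wittenEnergyDensity, coordDeriv, fderiv_of_notMem_tsupport _ h,
    image_eq_zero_of_notMem_tsupport h] at hZ

lemma inner_wittenH_eq (nm : ℕ) (T : ℝ) (hs : ContDiff ℝ 2 s) (Z : EuclideanSpace ℝ (Fin l)) :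
    ⟪wittenH l nm T s Z, s Z⟫ =
      wittenEnergyDensity l nm T s Z - ∑ α, coordDeriv α (coordFlux T α s) Z := by
  simp only [wittenH, wittenEnergyDensity, coordDeriv_coordFlux hs,
    pderiv2_eq_coordDeriv_coordDeriv, inner_add_left, inner_neg_left, sum_inner,
    real_inner_smul_left, real_inner_self_eq_norm_sq, Finset.sum_sub_distrib,
    Finset.sum_add_distrib, ← Finset.sum_mul, EuclideanSpace.real_norm_sq_eq Z, Finset.mul_sum,
    Finset.sum_const, Finset.card_univ, Fintype.card_fin, nsmul_eq_mul]
  ring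

end WittenLaplacian

open RealInnerProductSpace in
theorem model_witten_laplacian_nonneg_general (l nm : ℕ) (T : ℝ) (hT : 0 ≤ T)
    (s : EuclideanSpace ℝ (Fin l) → ExtAlg l) (hs : ContDiff ℝ (⊤ : ℕ∞) s)
    (hsupp : HasCompactSupport s) :
    0 ≤ ∫ Z, ⟪wittenH l nm T s Z, s Z⟫ := by
  have hs2 : ContDiff ℝ 2 s := hs.of_le (WithTop.coe_le_coe.mpr le_top)
  have hflux α : ContDiff ℝ 1 (coordFlux T α s) := hs2.coordFlux (n := 1) T α
  have hdiv α : Integrable (coordDeriv α (coordFlux T α s)) :=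
    ((hflux α).coordDeriv (n := 0) α).continuous.integrable_of_hasCompactSupport
      ((hsupp.coordFlux T α).coordDeriv α)
  calc 0 ≤ ∫ Z, wittenEnergyDensity l nm T s Z :=
        integral_nonneg (wittenEnergyDensity_nonneg nm hT s)
    _ = (∫ Z, wittenEnergyDensity l nm T s Z) - ∑ α, ∫ Z, coordDeriv α (coordFlux T α s) Z := by
        simp [coordDeriv, integral_fderiv_apply_eq_zero (hflux _) (hsupp.coordFlux T _)]
    _ = ∫ Z, ⟪wittenH l nm T s Z, s Z⟫ := by
        rw [← integral_finsetSum _ fun α _ => hdiv α, ← integral_sub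
          (integrable_wittenEnergyDensity nm T (hs2.of_le one_le_two) hsupp)
          (integrable_finsetSum _ fun α _ => hdiv α)]
        simp_rw [inner_wittenH_eq nm T hs2]

open RealInnerProductSpace in
/-- Positivity of the model Witten Laplacian: for `T ≥ 0` and every smooth compactly
supported `s : ℝ^l → ΛV*`, one has `∫ ⟨H_T s, s⟩ ≥ 0`. -/
theorem model_witten_laplacian_nonneg (l nm : ℕ) (hnm : nm ≤ l) (T : ℝ) (hT : 0 ≤ T)
    (s : EuclideanSpace ℝ (Fin l) → ExtAlg l) (hs : ContDiff ℝ (⊤ : ℕ∞) s)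
    (hsupp : HasCompactSupport s) :
    0 ≤ ∫ Z, ⟪wittenH l nm T s Z, s Z⟫ :=
  model_witten_laplacian_nonneg_general l nm T hT s hs hsupp

end
end

section
/- Let ε > 0, let ρ : ℝ^l → [0,1] be a measurable function such that ρ(Z) = 1 whenever |Z| ≤ ε/2 and ρ(Z) = 0 whenever |Z| ≥ ε, and let γ ≥ 0 be a real number. Then there exists C > 0 such that for all T ≥ 1, ∫_{ℝ^l} |Z|^{2γ}·ρ(Z)²·exp(−T|Z|²) dZ ≤ C·T^{−γ}·∫_{ℝ^l} ρ(Z)²·exp(−T|Z|²) dZ. (This is the Gaussian moment estimate underlying the projection bound (2.65): ‖p_T |Z|^γ s‖ ≤ C T^{−γ/2} ‖s‖.) -/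
/-!
Because `x ^ γ * exp (-x / 2)` is bounded on `[0, ∞)`, the weight `|Z| ^ (2γ)` can be traded
for `T ^ (-γ)` at the cost of halving the Gaussian exponent, so the left-hand side is
`O(T ^ (-γ - l / 2))`. Since `ρ = 1` on the ball of radius `ε / 2`, the right-hand integral is at
least the Gaussian mass of that ball, which the substitution `Z ↦ Z / √T` bounds below by a
multiple of `T ^ (-l / 2)`.
-/
open MeasureTheory Metric Real Module
open scoped Nat

namespace Real

theorem exists_rpow_le_mul_exp_mul {γ c : ℝ} (hγ : 0 ≤ γ) (hc : 0 < c) :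
    ∃ M > 0, ∀ x, 0 ≤ x → x ^ γ ≤ M * exp (c * x) := by
  set n := ⌈γ⌉₊
  refine ⟨1 + n ! / c ^ n, by positivity, fun x hx => ?_⟩
  have h_rpow : x ^ γ ≤ 1 + x ^ n := by
    rcases le_or_gt x 1 with h | h
    · linarith [rpow_le_one hx h hγ, pow_nonneg hx n]
    · have := rpow_le_rpow_of_exponent_le h.le (Nat.le_ceil γ)
      rw [rpow_natCast] at this
      linarith
  have h_pow : x ^ n ≤ n ! / c ^ n * exp (c * x) := by
    have := pow_div_factorial_le_exp (c * x) (by positivity) n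
    rw [mul_pow, div_le_iff₀ (by positivity)] at this
    rw [div_mul_eq_mul_div, le_div_iff₀ (by positivity)]
    linarith
  calc x ^ γ ≤ 1 + x ^ n := h_rpow
    _ ≤ exp (c * x) + n ! / c ^ n * exp (c * x) :=
      add_le_add (one_le_exp (by positivity)) h_pow
    _ = (1 + n ! / c ^ n) * exp (c * x) := by ring

theorem rpow_mul_exp_neg_mul_sq_le {γ M T r : ℝ}
    (hM : ∀ x, 0 ≤ x → x ^ γ ≤ M * exp (2⁻¹ * x)) (hT : 0 < T) (hr : 0 ≤ r) :
    r ^ (2 * γ) * exp (-T * r ^ 2) ≤ M * T ^ (-γ) * exp (-(T / 2) * r ^ 2) := by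
  have h_scale : r ^ (2 * γ) = T ^ (-γ) * (T * r ^ 2) ^ γ := by
    rw [rpow_mul hr, rpow_two, mul_rpow hT.le (sq_nonneg r), ← mul_assoc, ← rpow_add hT,
      neg_add_cancel, rpow_zero, one_mul]
  calc r ^ (2 * γ) * exp (-T * r ^ 2)
      ≤ T ^ (-γ) * (M * exp (2⁻¹ * (T * r ^ 2))) * exp (-T * r ^ 2) := by
        rw [h_scale]; gcongr; exact hM _ (by positivity)
    _ = M * T ^ (-γ) * exp (-(T / 2) * r ^ 2) := by
        rw [show -(T / 2) * r ^ 2 = 2⁻¹ * (T * r ^ 2) + -T * r ^ 2 by ring, exp_add]; ring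

end Real

section Gaussian

variable {V : Type*} [NormedAddCommGroup V] [InnerProductSpace ℝ V] [FiniteDimensional ℝ V]
  [MeasurableSpace V] [BorelSpace V]

theorem integrable_exp_neg_mul_sq_norm {b : ℝ} (hb : 0 < b) :
    Integrable fun x : V => exp (-b * ‖x‖ ^ 2) :=
  Integrable.of_integral_ne_zero <| by
    rw [GaussianFourier.integral_rexp_neg_mul_sq_norm hb]; positivity

theorem integral_exp_neg_half_mul_sq_norm {T : ℝ} (hT : 0 < T) :
    ∫ x : V, exp (-(T / 2) * ‖x‖ ^ 2) =
      (2 * π) ^ (finrank ℝ V / 2 : ℝ) * T ^ (-(finrank ℝ V / 2 : ℝ)) := by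
  rw [GaussianFourier.integral_rexp_neg_mul_sq_norm (by positivity), div_div_eq_mul_div,
    mul_comm π 2, div_rpow (by positivity) hT.le, rpow_neg hT.le, div_eq_mul_inv]

theorem integral_rpow_norm_mul_mul_exp_neg_mul_sq_norm_le {γ M T : ℝ} {w : V → ℝ}
    (hM : ∀ x, 0 ≤ x → x ^ γ ≤ M * exp (2⁻¹ * x)) (hw₀ : ∀ x, 0 ≤ w x) (hw₁ : ∀ x, w x ≤ 1)
    (hT : 0 < T) :
    ∫ x, ‖x‖ ^ (2 * γ) * w x * exp (-T * ‖x‖ ^ 2) ≤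
      M * T ^ (-γ) * ((2 * π) ^ (finrank ℝ V / 2 : ℝ) * T ^ (-(finrank ℝ V / 2 : ℝ))) := by
  rw [← integral_exp_neg_half_mul_sq_norm hT, ← integral_const_mul]
  refine integral_mono_of_nonneg (.of_forall fun x => by have := hw₀ x; positivity)
    ((integrable_exp_neg_mul_sq_norm (by positivity)).const_mul _) (.of_forall fun x => ?_)
  calc ‖x‖ ^ (2 * γ) * w x * exp (-T * ‖x‖ ^ 2)
      ≤ ‖x‖ ^ (2 * γ) * exp (-T * ‖x‖ ^ 2) := by
        rw [mul_right_comm]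
        exact mul_le_of_le_one_right (by positivity) (hw₁ x)
    _ ≤ _ := rpow_mul_exp_neg_mul_sq_le hM hT (norm_nonneg x)

end Gaussian

section Scaling

variable {E : Type*} [NormedAddCommGroup E] [NormedSpace ℝ E] [FiniteDimensional ℝ E]
  [MeasurableSpace E] [BorelSpace E] (μ : Measure E) [μ.IsAddHaarMeasure]

theorem integrableOn_ball_exp_neg_sq_norm (r : ℝ) :
    IntegrableOn (fun x : E => exp (-‖x‖ ^ 2)) (ball 0 r) μ :=
  ((by fun_prop : Continuous fun x : E => exp (-‖x‖ ^ 2)).locallyIntegrable.integrableOn_isCompact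
    (isCompact_closedBall 0 r)).mono_set ball_subset_closedBall

theorem setIntegral_ball_exp_neg_sq_norm_pos {r : ℝ} (hr : 0 < r) :
    0 < ∫ x in ball 0 r, exp (-‖x‖ ^ 2) ∂μ := by
  have : NeZero (μ.restrict (ball 0 r)) :=
    ⟨by rw [Ne, Measure.restrict_eq_zero]; exact (measure_ball_pos μ 0 hr).ne'⟩
  exact integral_exp_pos (integrableOn_ball_exp_neg_sq_norm μ r)

theorem setIntegral_ball_exp_neg_sq_norm_mul_rpow_le {r T : ℝ} (hr : 0 ≤ r) (hT : 1 ≤ T) :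
    (∫ x in ball 0 r, exp (-‖x‖ ^ 2) ∂μ) * T ^ (-(finrank ℝ E / 2 : ℝ)) ≤
      ∫ x in ball 0 r, exp (-T * ‖x‖ ^ 2) ∂μ := by
  have hT₀ : 0 < T := one_pos.trans_le hT
  have hs : 0 < √T := sqrt_pos.2 hT₀
  have h_scale : ∫ x in ball 0 r, exp (-T * ‖x‖ ^ 2) ∂μ =
      (√T ^ finrank ℝ E)⁻¹ * ∫ x in ball 0 (√T * r), exp (-‖x‖ ^ 2) ∂μ := by
    have := Measure.setIntegral_comp_smul_of_pos μ (fun x => exp (-‖x‖ ^ 2)) (ball 0 r) hs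
    rw [_root_.smul_ball hs.ne', smul_zero, norm_of_nonneg hs.le, smul_eq_mul] at this
    rw [← this]
    congr 1 with x
    rw [norm_smul, mul_pow, norm_of_nonneg hs.le, sq_sqrt hT₀.le, neg_mul]
  have h_pow : (√T ^ finrank ℝ E)⁻¹ = T ^ (-(finrank ℝ E / 2 : ℝ)) := by
    rw [sqrt_eq_rpow, ← rpow_natCast, ← rpow_mul hT₀.le, rpow_neg hT₀.le]
    ring_nf
  have h_mono : ∫ x in ball 0 r, exp (-‖x‖ ^ 2) ∂μ ≤ ∫ x in ball 0 (√T * r), exp (-‖x‖ ^ 2) ∂μ :=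
    setIntegral_mono_set (integrableOn_ball_exp_neg_sq_norm μ _)
      (.of_forall fun x => (exp_pos _).le)
      (ball_subset_ball (le_mul_of_one_le_left hr (one_le_sqrt.2 hT))).eventuallyLE
  rw [h_scale, h_pow, mul_comm]
  exact mul_le_mul_of_nonneg_left h_mono (by positivity)

end Scaling

theorem gaussian_moment_estimate_general (l : ℕ) (ε : ℝ) (hε : 0 < ε) (γ : ℝ) (hγ : 0 ≤ γ)
    (ρ : EuclideanSpace ℝ (Fin l) → ℝ) (hmeas : Measurable ρ)
    (hrange : ∀ Z, ρ Z ∈ Set.Icc (0 : ℝ) 1)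
    (hone : ∀ Z, ‖Z‖ ≤ ε / 2 → ρ Z = 1) :
    ∃ C : ℝ, 0 < C ∧ ∀ T : ℝ, 1 ≤ T →
      (∫ Z : EuclideanSpace ℝ (Fin l), ‖Z‖ ^ (2 * γ) * ρ Z ^ 2 * Real.exp (-T * ‖Z‖ ^ 2)) ≤
        C * T ^ (-γ) *
          ∫ Z : EuclideanSpace ℝ (Fin l), ρ Z ^ 2 * Real.exp (-T * ‖Z‖ ^ 2) := by
  obtain ⟨M, hM₀, hM⟩ := exists_rpow_le_mul_exp_mul hγ (inv_pos.2 two_pos)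
  set d : ℝ := finrank ℝ (EuclideanSpace ℝ (Fin l)) / 2
  set G := ∫ Z in ball (0 : EuclideanSpace ℝ (Fin l)) (ε / 2), exp (-‖Z‖ ^ 2)
  have hG : 0 < G := setIntegral_ball_exp_neg_sq_norm_pos volume (half_pos hε)
  have hρ_sq_le : ∀ Z, ρ Z ^ 2 ≤ 1 := fun Z => pow_le_one₀ (hrange Z).1 (hrange Z).2
  refine ⟨M * (2 * π) ^ d / G, by positivity, fun T hT => ?_⟩
  have hT₀ : 0 < T := one_pos.trans_le hT
  have h_num := integral_rpow_norm_mul_mul_exp_neg_mul_sq_norm_le (w := fun Z => ρ Z ^ 2) hM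
    (fun Z => sq_nonneg _) hρ_sq_le hT₀
  have h_den : G * T ^ (-d) ≤ ∫ Z, ρ Z ^ 2 * exp (-T * ‖Z‖ ^ 2) := by
    refine (setIntegral_ball_exp_neg_sq_norm_mul_rpow_le volume (half_pos hε).le hT).trans ?_
    calc ∫ Z in ball 0 (ε / 2), exp (-T * ‖Z‖ ^ 2)
        = ∫ Z in ball 0 (ε / 2), ρ Z ^ 2 * exp (-T * ‖Z‖ ^ 2) :=
          setIntegral_congr_fun measurableSet_ball fun Z hZ => by
            rw [hone Z (mem_ball_zero_iff.1 hZ).le, one_pow, one_mul]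
      _ ≤ ∫ Z, ρ Z ^ 2 * exp (-T * ‖Z‖ ^ 2) :=
          setIntegral_le_integral
            ((integrable_exp_neg_mul_sq_norm hT₀).bdd_mul (hmeas.pow_const 2).aestronglyMeasurable
              (.of_forall fun Z => by rw [norm_pow, norm_of_nonneg (hrange Z).1]; exact hρ_sq_le Z))
            (.of_forall fun Z => by positivity)
  calc _ ≤ M * T ^ (-γ) * ((2 * π) ^ d * T ^ (-d)) := h_num
    _ = M * (2 * π) ^ d / G * T ^ (-γ) * (G * T ^ (-d)) := by field_simp
    _ ≤ _ := mul_le_mul_of_nonneg_left h_den (by positivity)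

/-- The Gaussian moment estimate underlying (2.65): for a cutoff `ρ` as in (2.47) and
`γ ≥ 0`, there is `C > 0` such that for all `T ≥ 1`,
`∫ |Z|^{2γ}ρ(Z)²exp(−T|Z|²) dZ ≤ C·T^{−γ}·∫ ρ(Z)²exp(−T|Z|²) dZ`. -/
theorem gaussian_moment_estimate (l : ℕ) (ε : ℝ) (hε : 0 < ε) (γ : ℝ) (hγ : 0 ≤ γ)
    (ρ : EuclideanSpace ℝ (Fin l) → ℝ) (hmeas : Measurable ρ)
    (hrange : ∀ Z, ρ Z ∈ Set.Icc (0 : ℝ) 1)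
    (hone : ∀ Z, ‖Z‖ ≤ ε / 2 → ρ Z = 1)
    (hzero : ∀ Z, ε ≤ ‖Z‖ → ρ Z = 0) :
    ∃ C : ℝ, 0 < C ∧ ∀ T : ℝ, 1 ≤ T →
      (∫ Z : EuclideanSpace ℝ (Fin l), ‖Z‖ ^ (2 * γ) * ρ Z ^ 2 * Real.exp (-T * ‖Z‖ ^ 2)) ≤
        C * T ^ (-γ) *
          ∫ Z : EuclideanSpace ℝ (Fin l), ρ Z ^ 2 * Real.exp (-T * ‖Z‖ ^ 2) :=
  gaussian_moment_estimate_general l ε hε γ hγ ρ hmeas hrange hone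
end
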